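/- For a ∈ Z_p (equivalently a ∈ Z/p^nZ), let μ_a: V_n → V_n be defined by (μ_a x)_j = x_{aj}. Then μ_a(v_{k,n}) - a^k v_{k,n} ∈ V_{k,n} for all 0 ≤ k ≤ p^n - 1; in particular each V_{k+1,n} is stable under μ_a. -/

import Mathlib

/-- The binomial vector `v_{m,n}` in `V_n = E^{Z/p^nZ}`, `j ↦ C(j,m) mod p`. -/
def vSeq (p n : ℕ) (E : Type*) [Semiring E] (m : ℕ) : ZMod (p ^ n) → E :=
  fun j => ((ZMod.val j).choose m : E)

/-- The subspace `V_{k,n}`, spanned by the `v_{ℓ,n}` for `0 ≤ ℓ < k`. -/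
def VSpan (p n : ℕ) (E : Type*) [Field E] (k : ℕ) : Submodule E (ZMod (p ^ n) → E) :=
  Submodule.span E {w | ∃ ℓ < k, w = vSeq p n E ℓ}

/-- The difference operator `Δ`, `(Δx)_j = x_{j-1} - x_j`, indices mod `p^n`. -/
def delta (p n : ℕ) (E : Type*) [Ring E] (x : ZMod (p ^ n) → E) : ZMod (p ^ n) → E :=
  fun j => x (j - 1) - x j

/-!
Let `Δ` be the forward difference `(Δx)_j = x_{j+1} - x_j` and `S = Δ + 1` the shift. Scaling
the argument by `a` intertwines `Δ` with `S^a - 1 = PΔ`, where `P = 1 + S + ⋯ + S^{a-1}` commutes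
with `Δ`, so `Δ^k ∘ μ_a = μ_a ∘ P^k Δ^k`. In characteristic `p` the sequence `m ↦ C(m, k)` is
`p^n`-periodic for `k < p^n`, because `(1 + X)^{p^n} = 1 + X^{p^n}`; hence `Δ v_{k+1} = v_k` holds
on `Z/p^nZ` with no wrap-around defect, and `Δ^k v_k = 1`, on which `P` acts by `a`. Thus
`Δ^k (μ_a v_k - a^k v_k) = 0`, and the Gregory–Newton expansion `x = ∑_ℓ (Δ^ℓ x)_0 v_ℓ` shows that
`ker Δ^k ⊆ V_{k,n}`. Stability of `V_{k+1,n}` follows because it is spanned by `v_0, …, v_k`.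
-/

open Polynomial Finset Function fwdDiff fwdDiff_aux

theorem Nat.periodic_cast_choose_of_lt_pow {E : Type*} [CommSemiring E] {p : ℕ} [ExpChar E p]
    {n k : ℕ} (hk : k < p ^ n) : Periodic (fun m : ℕ => (m.choose k : E)) (p ^ n) := by
  intro m
  have hfrob : ((X + 1 : E[X]) ^ (m + p ^ n)) = (X + 1) ^ m * X ^ p ^ n + (X + 1) ^ m := by
    rw [pow_add, add_pow_expChar_pow, one_pow, mul_add, mul_one]
  simpa [coeff_X_add_one_pow, coeff_mul_X_pow', hk.not_ge] using congrArg (coeff · k) hfrob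

section Shift

variable {M G : Type*} [AddCommMonoid M] [AddCommGroup G]

theorem shiftₗ_pow_sub_one (h : M) (m : ℕ) :
    shiftₗ M G h ^ m - 1 = (∑ i ∈ range m, shiftₗ M G h ^ i) * fwdDiffₗ M G h := by
  rw [← geom_sum_mul, shiftₗ, add_sub_cancel_right]

theorem commute_sum_shiftₗ_pow_fwdDiffₗ (h : M) (m : ℕ) :
    Commute (∑ i ∈ range m, shiftₗ M G h ^ i) (fwdDiffₗ M G h) :=
  Commute.sum_left _ _ _ fun i _ =>
    ((Commute.refl _).add_left (Commute.one_left _)).pow_left i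

theorem sum_shiftₗ_pow_pow_apply_of_fwdDiff_eq_zero {h : M} {c : M → G} (hc : Δ_[h] c = 0)
    (m k : ℕ) : ((∑ i ∈ range m, shiftₗ M G h ^ i) ^ k) c = m ^ k • c := by
  have hshift : ∀ i, (shiftₗ M G h ^ i) c = c := fun i => by
    rw [Module.End.pow_apply, iterate_fixed]
    rw [shiftₗ, LinearMap.add_apply, Module.End.one_apply, coe_fwdDiffₗ, hc, zero_add]
  induction k with
  | zero => simp
  | succ k ih =>
    rw [pow_succ, Module.End.mul_apply, LinearMap.sum_apply]
    simp [hshift, ih, pow_succ, mul_nsmul]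

end Shift

section Scaling

variable {M G : Type*} [Semiring M] [AddCommGroup G]

theorem fwdDiffₗ_mul_funLeft_natCast_mul (m : ℕ) :
    fwdDiffₗ M G 1 * LinearMap.funLeft ℤ G ((m : M) * ·)
      = LinearMap.funLeft ℤ G ((m : M) * ·) * (shiftₗ M G 1 ^ m - 1) := by
  ext x j
  simp [shiftₗ_pow_apply, fwdDiff, mul_add]

theorem fwdDiffₗ_pow_mul_funLeft_natCast_mul (m k : ℕ) :
    fwdDiffₗ M G 1 ^ k * LinearMap.funLeft ℤ G ((m : M) * ·)
      = LinearMap.funLeft ℤ G ((m : M) * ·) *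
          ((∑ i ∈ range m, shiftₗ M G 1 ^ i) ^ k * fwdDiffₗ M G 1 ^ k) := by
  have hsemiconj : SemiconjBy (LinearMap.funLeft ℤ G ((m : M) * ·))
      (shiftₗ M G 1 ^ m - 1) (fwdDiffₗ M G 1) :=
    (fwdDiffₗ_mul_funLeft_natCast_mul m).symm
  rw [← (commute_sum_shiftₗ_pow_fwdDiffₗ 1 m).mul_pow, ← shiftₗ_pow_sub_one]
  exact (hsemiconj.pow_right k).eq.symm

theorem fwdDiff_iter_comp_natCast_mul {x : M → G} {k : ℕ} {g : G}
    (hx : Δ_[1] ^[k] x = fun _ => g) (m : ℕ) :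
    Δ_[1] ^[k] (fun j => x (m * j)) = fun _ => m ^ k • g := by
  have hg : Δ_[(1 : M)] (fun _ => g) = 0 := by ext; simp [fwdDiff]
  have h := LinearMap.congr_fun (fwdDiffₗ_pow_mul_funLeft_natCast_mul (G := G) m k) x
  simp only [Module.End.mul_apply, coe_fwdDiffₗ_pow, hx,
    sum_shiftₗ_pow_pow_apply_of_fwdDiff_eq_zero hg] at h
  exact h

end Scaling

section Binomial

variable (p n : ℕ) (E : Type*)

theorem vSeq_natCast [CommSemiring E] [ExpChar E p] {k : ℕ} (hk : k < p ^ n) (m : ℕ) :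
    vSeq p n E k m = m.choose k := by
  rw [vSeq, ZMod.val_natCast]
  exact (Nat.periodic_cast_choose_of_lt_pow hk).map_mod_nat m

theorem vSeq_zero [Semiring E] : vSeq p n E 0 = fun _ => 1 := by
  funext j; simp [vSeq]

theorem fwdDiff_vSeq_succ [CommRing E] [ExpChar E p] [NeZero p] {k : ℕ} (hk : k + 1 < p ^ n) :
    Δ_[1] (vSeq p n E (k + 1)) = vSeq p n E k := by
  funext j
  rw [← ZMod.natCast_zmod_val j, fwdDiff, ← Nat.cast_succ, vSeq_natCast p n E hk,
    vSeq_natCast p n E hk, vSeq_natCast p n E (by omega), Nat.choose_succ_succ', Nat.cast_add,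
    add_sub_cancel_right]

theorem fwdDiff_iter_vSeq_self [CommRing E] [ExpChar E p] [NeZero p] {k : ℕ} (hk : k < p ^ n) :
    Δ_[1] ^[k] (vSeq p n E k) = fun _ => 1 := by
  induction k with
  | zero => exact vSeq_zero p n E
  | succ k ih => rw [iterate_succ_apply, fwdDiff_vSeq_succ p n E hk, ih (by omega)]

theorem sum_fwdDiff_iter_smul_vSeq [Ring E] [NeZero p] (x : ZMod (p ^ n) → E) :
    ∑ ℓ ∈ range (p ^ n), Δ_[1] ^[ℓ] x 0 • vSeq p n E ℓ = x := by
  funext j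
  have h := shift_eq_sum_fwdDiff_iter 1 x j.val 0
  rw [zero_add, nsmul_one, ZMod.natCast_zmod_val] at h
  rw [h, Finset.sum_apply]
  refine (sum_subset (range_subset_range.mpr j.val_lt) fun ℓ _ hℓ => ?_).symm.trans ?_
  · have hjℓ : j.val < ℓ := by simpa using hℓ
    simp [vSeq, Nat.choose_eq_zero_of_lt hjℓ]
  · simp [vSeq, nsmul_eq_mul, Nat.cast_comm]

end Binomial

section VSpan

variable (p n : ℕ) (E : Type*) [Field E]

theorem VSpan_mono {k l : ℕ} (h : k ≤ l) : VSpan p n E k ≤ VSpan p n E l :=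
  Submodule.span_mono fun _ ⟨ℓ, hℓ, hw⟩ => ⟨ℓ, hℓ.trans_le h, hw⟩

theorem vSeq_mem_VSpan {ℓ k : ℕ} (h : ℓ < k) : vSeq p n E ℓ ∈ VSpan p n E k :=
  Submodule.subset_span ⟨ℓ, h, rfl⟩

theorem mem_VSpan_of_fwdDiff_iter_eq_zero [NeZero p] {k : ℕ} (hk : k ≤ p ^ n)
    {x : ZMod (p ^ n) → E} (hx : Δ_[1] ^[k] x = 0) : x ∈ VSpan p n E k := by
  rw [← sum_fwdDiff_iter_smul_vSeq p n E x, ← sum_subset (range_subset_range.mpr hk)]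
  · exact sum_mem fun ℓ hℓ => Submodule.smul_mem _ _ (vSeq_mem_VSpan p n E (mem_range.mp hℓ))
  · intro ℓ _ hℓ
    obtain ⟨i, rfl⟩ := Nat.exists_eq_add_of_le' (not_lt.mp (mem_range.not.mp hℓ))
    rw [iterate_add_apply, hx, iterate_fixed (by ext; simp [fwdDiff]), Pi.zero_apply, zero_smul]

variable [ExpChar E p] [NeZero p]

theorem comp_mul_vSeq_sub_smul_mem_VSpan (a : ZMod (p ^ n)) {k : ℕ} (hk : k < p ^ n) :
    (fun j => vSeq p n E k (a * j)) - ((a.val : E) ^ k) • vSeq p n E k ∈ VSpan p n E k := by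
  apply mem_VSpan_of_fwdDiff_iter_eq_zero p n E hk.le
  have hcomp := fwdDiff_iter_comp_natCast_mul (fwdDiff_iter_vSeq_self p n E hk) a.val
  rw [ZMod.natCast_zmod_val] at hcomp
  rw [← coe_fwdDiffₗ_pow, map_sub, coe_fwdDiffₗ_pow, fwdDiff_iter_const_smul, hcomp,
    fwdDiff_iter_vSeq_self p n E hk]
  ext
  simp

theorem comp_mul_mem_VSpan (a : ZMod (p ^ n)) {k : ℕ} (hk : k ≤ p ^ n) {x : ZMod (p ^ n) → E}
    (hx : x ∈ VSpan p n E k) : (fun j => x (a * j)) ∈ VSpan p n E k := by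
  suffices VSpan p n E k ≤ (VSpan p n E k).comap (LinearMap.funLeft E E (a * ·)) from this hx
  refine Submodule.span_le.mpr ?_
  rintro _ ⟨ℓ, hℓ, rfl⟩
  have h := Submodule.add_mem _
    (VSpan_mono p n E hℓ.le (comp_mul_vSeq_sub_smul_mem_VSpan p n E a (hℓ.trans_le hk)))
    (Submodule.smul_mem _ ((a.val : E) ^ ℓ) (vSeq_mem_VSpan p n E hℓ))
  rw [sub_add_cancel] at h
  exact h

end VSpan

theorem mu_action_general (p n : ℕ) [Fact p.Prime]
    (E : Type*) [Field E] [CharP E p] (a : ZMod (p ^ n)) :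
    (∀ k ≤ p ^ n - 1,
        (fun j => vSeq p n E k (a * j)) - ((ZMod.val a : E) ^ k) • vSeq p n E k
          ∈ VSpan p n E k) ∧
    (∀ k ≤ p ^ n - 1, ∀ x ∈ VSpan p n E (k + 1),
        (fun j => x (a * j)) ∈ VSpan p n E (k + 1)) := by
  have hpos : 0 < p ^ n := Nat.pos_of_neZero _
  exact ⟨fun k hk => comp_mul_vSeq_sub_smul_mem_VSpan p n E a (by omega),
    fun k hk _ hx => comp_mul_mem_VSpan p n E a (by omega) hx⟩

/-- For `a ∈ Z/p^nZ`, the operator `μ_a : (x_j) ↦ (x_{aj})` satisfies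
`μ_a(v_{k,n}) - a^k v_{k,n} ∈ V_{k,n}` for `0 ≤ k ≤ p^n - 1`; in particular
each `V_{k+1,n}` is stable under `μ_a`. -/
theorem mu_action (p n : ℕ) [Fact p.Prime] (hn : 1 ≤ n)
    (E : Type*) [Field E] [CharP E p] (a : ZMod (p ^ n)) :
    (∀ k ≤ p ^ n - 1,
        (fun j => vSeq p n E k (a * j)) - ((ZMod.val a : E) ^ k) • vSeq p n E k
          ∈ VSpan p n E k) ∧
    (∀ k ≤ p ^ n - 1, ∀ x ∈ VSpan p n E (k + 1),
        (fun j => x (a * j)) ∈ VSpan p n E (k + 1)) :=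
  mu_action_general p n E a
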